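/- arXiv:0909.3134 — 2 statements merged into one kernel-verified Lean document; each statement's English description precedes it below -/
import Mathlib

section
/- (Lemma 5.1, osp(2m+1|2)) If λ ∈ 𝒫 with λ₀ ≤ m−1, then λ ∼ λ^{j,q} for every 0 ≤ j ≤ λ₀ and every q ∈ ℤ. -/
open Finset
open Fin.NatCast

/-- The standard basis vector `ε_i` of `ℚ^{1+m}` (with `ε_0 = δ`). -/
noncomputable def eps (m i : ℕ) : Fin (m+1) → ℚ := Pi.single (i : Fin (m+1)) 1

/-- The bilinear form `⟨λ, μ⟩ = −λ₀μ₀ + Σ_{i=1}^m λ_i μ_i` on `ℚ^{1+m}`. -/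
noncomputable def form (m : ℕ) (l μ : Fin (m+1) → ℚ) : ℚ :=
  -(l 0 * μ 0) + ∑ i : Fin (m+1), (if i = 0 then 0 else l i * μ i)

/-- `ρ` for `osp(2m|2)`: `ρ₀ = 1−m`, `ρ_i = m−i`. -/
noncomputable def rhoD (m : ℕ) : Fin (m+1) → ℚ :=
  fun i => if i = 0 then 1 - (m : ℚ) else (m : ℚ) - (i : ℕ)

/-- `ρ` for `osp(2m+1|2)`: `ρ₀ = 1/2−m`, `ρ_i = m−i+1/2`. -/
noncomputable def rhoB (m : ℕ) : Fin (m+1) → ℚ :=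
  fun i => if i = 0 then 1/2 - (m : ℚ) else (m : ℚ) - (i : ℕ) + 1/2

/-- All coordinates are integers. -/
def IsIntegralWt (m : ℕ) (l : Fin (m+1) → ℚ) : Prop := ∀ i, ∃ z : ℤ, l i = z

/-- Dominant integral weights for `osp(2m|2)`. -/
def PD (m : ℕ) (l : Fin (m+1) → ℚ) : Prop :=
  IsIntegralWt m l ∧ 0 ≤ l 0 ∧
  (∀ i j : ℕ, 1 ≤ i → i ≤ j → j ≤ m - 1 → l (j : Fin (m+1)) ≤ l (i : Fin (m+1))) ∧
  |l (m : Fin (m+1))| ≤ l ((m - 1 : ℕ) : Fin (m+1)) ∧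
  (∀ i : ℕ, 1 ≤ i → i ≤ m - 1 → 0 ≤ l (i : Fin (m+1))) ∧
  (∀ i : ℕ, 1 ≤ i → i ≤ m → l 0 < (i : ℚ) → l (i : Fin (m+1)) = 0)

/-- Dominant integral weights for `osp(2m+1|2)`. -/
def PB (m : ℕ) (l : Fin (m+1) → ℚ) : Prop :=
  IsIntegralWt m l ∧ 0 ≤ l 0 ∧
  (∀ i j : ℕ, 1 ≤ i → i ≤ j → j ≤ m → l (j : Fin (m+1)) ≤ l (i : Fin (m+1))) ∧
  (∀ i : ℕ, 1 ≤ i → i ≤ m → 0 ≤ l (i : Fin (m+1))) ∧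
  (∀ i : ℕ, 1 ≤ i → i ≤ m → l 0 < (i : ℚ) → l (i : Fin (m+1)) = 0)

/-- `λ` is atypical (w.r.t. a given `ρ`): `⟨λ+ρ, δ+s·ε_i⟩ = 0` for some `1 ≤ i ≤ m`, `s = ±1`. -/
def Atyp (m : ℕ) (ρ l : Fin (m+1) → ℚ) : Prop :=
  ∃ i : ℕ, 1 ≤ i ∧ i ≤ m ∧ ∃ s : ℚ, (s = 1 ∨ s = -1) ∧
    form m (l + ρ) (eps m 0 + s • eps m i) = 0

abbrev GLQ (m : ℕ) := (Fin (m+1) → ℚ) ≃ₗ[ℚ] (Fin (m+1) → ℚ)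

/-- Permutations of the coordinates `1, …, m` (fixing coordinate `0`). -/
def permSet (m : ℕ) : Set (GLQ m) :=
  {w | ∃ σ : Equiv.Perm (Fin (m+1)), σ 0 = 0 ∧ ∀ v, w v = v ∘ σ}

/-- The sign change of coordinate `0`. -/
def flip0Set (m : ℕ) : Set (GLQ m) :=
  {w | ∀ v k, w v k = if k = 0 then -(v k) else v k}

/-- Simultaneous sign changes of two coordinates among `1, …, m`. -/
def doubleFlipSet (m : ℕ) : Set (GLQ m) :=
  {w | ∃ i j : Fin (m+1), i ≠ 0 ∧ j ≠ 0 ∧ i ≠ j ∧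
    ∀ v k, w v k = if k = i ∨ k = j then -(v k) else v k}

/-- Sign changes of a single coordinate among `1, …, m`. -/
def singleFlipSet (m : ℕ) : Set (GLQ m) :=
  {w | ∃ i : Fin (m+1), i ≠ 0 ∧ ∀ v k, w v k = if k = i then -(v k) else v k}

/-- The Weyl group for `osp(2m|2)`. -/
def WD (m : ℕ) : Subgroup (GLQ m) :=
  Subgroup.closure (permSet m ∪ doubleFlipSet m ∪ flip0Set m)

/-- The Weyl group for `osp(2m+1|2)`. -/
def WB (m : ℕ) : Subgroup (GLQ m) :=
  Subgroup.closure (permSet m ∪ singleFlipSet m ∪ flip0Set m)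

/-- The block equivalence: the smallest equivalence relation with
`μ ∼ μ+α` for odd roots `α = ±(δ±ε_i)` with `⟨μ+ρ, α⟩ = 0`, and
`μ ∼ w(μ+ρ)−ρ` for `w ∈ W`. -/
def blockRel (m : ℕ) (ρ : Fin (m+1) → ℚ) (W : Subgroup (GLQ m)) :
    (Fin (m+1) → ℚ) → (Fin (m+1) → ℚ) → Prop :=
  Relation.EqvGen (fun μ ν =>
    (∃ i : ℕ, 1 ≤ i ∧ i ≤ m ∧ ∃ s t : ℚ, (s = 1 ∨ s = -1) ∧ (t = 1 ∨ t = -1) ∧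
      form m (μ + ρ) (t • (eps m 0 + s • eps m i)) = 0 ∧
      ν = μ + t • (eps m 0 + s • eps m i)) ∨
    (∃ w ∈ W, ν = w (μ + ρ) - ρ))

def blockD (m : ℕ) : (Fin (m+1) → ℚ) → (Fin (m+1) → ℚ) → Prop :=
  blockRel m (rhoD m) (WD m)

def blockB (m : ℕ) : (Fin (m+1) → ℚ) → (Fin (m+1) → ℚ) → Prop :=
  blockRel m (rhoB m) (WB m)

/-- The set `𝒫_λ = 𝒫_{λ+} ∪ 𝒫_{λ−}` for `osp(2m|2)`. -/
noncomputable def PlamD (m : ℕ) (l : Fin (m+1) → ℚ) : Set (Fin (m+1) → ℚ) :=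
  {μ | PD m μ ∧
    (μ = l + eps m 0 ∨ μ = l - eps m 0 ∨
     (∃ i : ℕ, 1 ≤ i ∧ i ≤ m - 1 ∧ (μ = l + eps m i ∨ μ = l - eps m i)) ∨
     (0 ≤ l (m : Fin (m+1)) ∧ μ = l + eps m m) ∨
     (l (m : Fin (m+1)) ≤ 0 ∧ μ = l - eps m m) ∨
     (l (m : Fin (m+1)) < 0 ∧ μ = l + eps m m) ∨
     (0 < l (m : Fin (m+1)) ∧ μ = l - eps m m))}

/-- The set `𝒫_λ = 𝒫_{λ+} ∪ 𝒫_{λ−}` for `osp(2m+1|2)`. -/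
noncomputable def PlamB (m : ℕ) (l : Fin (m+1) → ℚ) : Set (Fin (m+1) → ℚ) :=
  {μ | PB m μ ∧
    ((∃ i : ℕ, i ≤ m ∧ (μ = l + eps m i ∨ μ = l - eps m i)) ∨
     (l (m : Fin (m+1)) ≠ 0 ∧ μ = l))}

/-- The weight `λ^{j,q}`. -/
noncomputable def lamJQ (m : ℕ) (l : Fin (m+1) → ℚ) (l0 j : ℕ) (q : ℤ) : Fin (m+1) → ℚ :=
  ((j : ℚ) - (q : ℚ)) • eps m 0 + (∑ i ∈ Finset.Icc 1 j, l (i : Fin (m+1)) • eps m i) +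
    (q : ℚ) • eps m (j + 1) +
    ∑ i ∈ Finset.Icc (j+1) l0, (l (i : Fin (m+1)) + 1) • eps m (i+1)

/-- The weight `λ^{j,q}_−`. -/
noncomputable def lamJQm (m : ℕ) (l : Fin (m+1) → ℚ) (l0 j : ℕ) (q : ℤ) : Fin (m+1) → ℚ :=
  ((j : ℚ) - (q : ℚ)) • eps m 0 + (∑ i ∈ Finset.Icc 1 j, l (i : Fin (m+1)) • eps m i) +
    (q : ℚ) • eps m (j + 1) +
    (∑ i ∈ Finset.Icc (j+1) (l0 - 1), (l (i : Fin (m+1)) + 1) • eps m (i+1)) -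
    (l (l0 : Fin (m+1)) + 1) • eps m (l0 + 1)

/-- `λ^δ` for `osp(2m|2)`: coordinate `0` becomes `2m−2−λ₀`. -/
noncomputable def deltaD (m : ℕ) (l : Fin (m+1) → ℚ) : Fin (m+1) → ℚ :=
  fun i => if i = 0 then 2*(m : ℚ) - 2 - l 0 else l i

/-- `λ^δ` for `osp(2m+1|2)`: coordinate `0` becomes `2m−1−λ₀`. -/
noncomputable def deltaB (m : ℕ) (l : Fin (m+1) → ℚ) : Fin (m+1) → ℚ :=
  fun i => if i = 0 then 2*(m : ℚ) - 1 - l 0 else l i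

/-!
For fixed `j`, the shifted weight `λ^{j,q} + ρ` is orthogonal to the odd root `δ − ε_{j+1}`, and
`λ^{j,q}` moves along that root as `q` varies; since odd roots are isotropic, every `λ^{j,q}` is
reached from `λ^{j,0}` by odd reflections. The transposition of the coordinates `j+1, j+2`, acting
by the ρ-shifted action, sends `λ^{j+1,q+1}` to `λ^{j,q}`. Since `λ^{λ₀,0} = λ`, downward induction
on `j` links every `λ^{j,q}` to `λ`.
-/

lemma eps_apply {m i : ℕ} (hi : i ≤ m) (k : Fin (m+1)) :
    eps m i k = if (k : ℕ) = i then 1 else 0 := by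
  simp only [eps, Pi.single_apply, Fin.ext_iff, Fin.val_cast_of_lt (Nat.lt_succ_of_le hi)]

lemma natCast_ne_zero_of_le {m i : ℕ} (h1 : 1 ≤ i) (h2 : i ≤ m) : (i : Fin (m+1)) ≠ 0 := by
  rw [Ne, Fin.natCast_eq_zero]
  exact Nat.not_dvd_of_pos_of_lt h1 (Nat.lt_succ_of_le h2)

lemma rhoB_zero (m : ℕ) : rhoB m 0 = 1/2 - m := if_pos rfl

lemma rhoB_natCast {m i : ℕ} (h1 : 1 ≤ i) (h2 : i ≤ m) :
    rhoB m (i : Fin (m+1)) = m - i + 1/2 := by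
  have hi : ((i : Fin (m+1)) : ℕ) = i := Fin.val_cast_of_lt (Nat.lt_succ_of_le h2)
  rw [rhoB, if_neg (natCast_ne_zero_of_le h1 h2), hi]

section Form

variable {m : ℕ}

lemma form_add_left (a b c : Fin (m+1) → ℚ) : form m (a + b) c = form m a c + form m b c := by
  simp only [form, Pi.add_apply]
  rw [add_add_add_comm, ← Finset.sum_add_distrib]
  congr 1
  · ring
  · exact Finset.sum_congr rfl fun k _ => by split_ifs <;> ring

lemma form_smul_left (t : ℚ) (a c : Fin (m+1) → ℚ) : form m (t • a) c = t * form m a c := by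
  simp only [form, Pi.smul_apply, smul_eq_mul, mul_add, Finset.mul_sum]
  congr 1
  · ring
  · refine Finset.sum_congr rfl fun k _ => ?_
    split_ifs <;> ring

lemma form_smul_right (t : ℚ) (a c : Fin (m+1) → ℚ) : form m a (t • c) = t * form m a c := by
  simp only [form, Pi.smul_apply, smul_eq_mul, mul_add, Finset.mul_sum]
  congr 1
  · ring
  · refine Finset.sum_congr rfl fun k _ => ?_
    split_ifs <;> ring

variable {i : ℕ} (h1 : 1 ≤ i) (h2 : i ≤ m)
include h1 h2

lemma form_oddRoot (a : Fin (m+1) → ℚ) (s : ℚ) :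
    form m a (eps m 0 + s • eps m i) = -a 0 + s * a i := by
  have hne := natCast_ne_zero_of_le h1 h2
  rw [form, Finset.sum_eq_single (i : Fin (m+1))]
  · simp [eps, hne, hne.symm, mul_comm]
  · intro k _ hk
    split_ifs with hk0
    · rfl
    · simp [eps, hk, hk0]
  · simp

lemma form_oddRoot_self {s : ℚ} (hs : s = 1 ∨ s = -1) :
    form m (eps m 0 + s • eps m i) (eps m 0 + s • eps m i) = 0 := by
  have hne := natCast_ne_zero_of_le h1 h2
  rw [form_oddRoot h1 h2]
  rcases hs with rfl | rfl <;> simp [eps, hne, hne.symm]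

end Form

section Block

variable {m : ℕ} {ρ : Fin (m+1) → ℚ} {W : Subgroup (GLQ m)}

lemma blockRel_equivalence : Equivalence (blockRel m ρ W) := Relation.EqvGen.is_equivalence _

lemma blockRel_weyl {w : GLQ m} (hw : w ∈ W) (μ : Fin (m+1) → ℚ) :
    blockRel m ρ W μ (w (μ + ρ) - ρ) :=
  Relation.EqvGen.rel _ _ (Or.inr ⟨w, hw, rfl⟩)

section OddRoot

variable {i : ℕ} (h1 : 1 ≤ i) (h2 : i ≤ m) {s : ℚ} (hs : s = 1 ∨ s = -1)
include h1 h2 hs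

lemma blockRel_add_oddRoot {μ : Fin (m+1) → ℚ} {t : ℚ} (ht : t = 1 ∨ t = -1)
    (h : form m (μ + ρ) (eps m 0 + s • eps m i) = 0) :
    blockRel m ρ W μ (μ + t • (eps m 0 + s • eps m i)) :=
  Relation.EqvGen.rel _ _
    (Or.inl ⟨i, h1, h2, s, t, hs, ht, by rw [form_smul_right, h, mul_zero], rfl⟩)

/-- Odd roots are isotropic, so `μ + ρ` stays orthogonal to `α` along the whole line `μ + ℤα`. -/
lemma blockRel_add_zsmul_oddRoot {μ : Fin (m+1) → ℚ}
    (h : form m (μ + ρ) (eps m 0 + s • eps m i) = 0) (n : ℤ) :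
    blockRel m ρ W μ (μ + (n : ℚ) • (eps m 0 + s • eps m i)) := by
  set α := eps m 0 + s • eps m i
  have horth : ∀ n : ℤ, form m (μ + (n : ℚ) • α + ρ) α = 0 := fun n => by
    rw [add_right_comm, form_add_left, form_smul_left, h, form_oddRoot_self h1 h2 hs, mul_zero,
      add_zero]
  induction n using Int.induction_on with
  | zero => simpa using blockRel_equivalence.refl μ
  | succ n ih =>
    refine blockRel_equivalence.trans ih ?_
    convert blockRel_add_oddRoot h1 h2 hs (Or.inl rfl) (horth n) using 1
    push_cast
    module
  | pred n ih =>
    refine blockRel_equivalence.trans ih ?_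
    convert blockRel_add_oddRoot h1 h2 hs (Or.inr rfl) (horth (-n)) using 1
    push_cast
    module

end OddRoot

/-- The transposition of coordinates `a, b` is the reflection in `ε_a − ε_b`. -/
lemma blockRel_sub_smul_eps_sub_eps (hW : permSet m ⊆ W) {a b : ℕ} (ha1 : 1 ≤ a) (ha : a ≤ m)
    (hb1 : 1 ≤ b) (hb : b ≤ m) (μ : Fin (m+1) → ℚ) :
    blockRel m ρ W μ (μ - ((μ + ρ) a - (μ + ρ) b) • (eps m a - eps m b)) := by
  set σ := Equiv.swap (a : Fin (m+1)) b
  have hσ : LinearEquiv.funCongrLeft ℚ ℚ σ ∈ W := hW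
    ⟨σ, Equiv.swap_apply_of_ne_of_ne (natCast_ne_zero_of_le ha1 ha).symm
      (natCast_ne_zero_of_le hb1 hb).symm, fun _ => rfl⟩
  convert blockRel_weyl hσ μ using 1
  funext k
  simp only [LinearEquiv.funCongrLeft_apply, LinearMap.funLeft_apply, Pi.sub_apply, Pi.add_apply,
    Pi.smul_apply, smul_eq_mul, eps, Pi.single_apply, σ]
  rw [Equiv.swap_apply_def]
  split_ifs <;> simp_all <;> ring

end Block

lemma sum_smul_eps_add_apply {m c : ℕ} {s : Finset ℕ} (f : ℕ → ℚ) (hs : ∀ i ∈ s, i + c ≤ m)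
    (k : Fin (m+1)) :
    (∑ i ∈ s, f i • eps m (i + c)) k = if c ≤ k ∧ (k : ℕ) - c ∈ s then f (k - c) else 0 := by
  rw [Finset.sum_apply]
  simp only [Pi.smul_apply, smul_eq_mul]
  rw [Finset.sum_congr rfl fun i hi => by rw [eps_apply (hs i hi)]]
  split_ifs with hk
  · rw [Finset.sum_eq_single_of_mem _ hk.2 fun i _ hi => by rw [if_neg (by omega), mul_zero]]
    rw [if_pos (by omega), mul_one]
  · exact Finset.sum_eq_zero fun i hi => by
      rw [if_neg (by rintro h; exact hk ⟨by omega, by rwa [h, Nat.add_sub_cancel]⟩), mul_zero]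

section LamJQ

variable {m : ℕ} (l : Fin (m+1) → ℚ) {l0 j : ℕ} (q : ℤ)

lemma lamJQ_apply (hj : j ≤ l0) (hl0 : l0 + 1 ≤ m) {k : ℕ} (hk : k ≤ m) :
    lamJQ m l l0 j q k =
      if k = 0 then (j : ℚ) - q
      else if k ≤ j then l k
      else if k = j + 1 then (q : ℚ)
      else if k ≤ l0 + 1 then l (k - 1 : ℕ) + 1
      else 0 := by
  have hsum₁ := sum_smul_eps_add_apply (m := m) (c := 0) (s := Finset.Icc 1 j)
    (fun i => l i) (fun i hi => by rw [Finset.mem_Icc] at hi; omega) k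
  have hsum₂ := sum_smul_eps_add_apply (m := m) (c := 1) (s := Finset.Icc (j+1) l0)
    (fun i => l i + 1) (fun i hi => by rw [Finset.mem_Icc] at hi; omega) k
  simp only [add_zero] at hsum₁
  simp only [lamJQ, Pi.add_apply, Pi.smul_apply, smul_eq_mul, hsum₁, hsum₂,
    eps_apply (Nat.zero_le m), eps_apply (show j + 1 ≤ m by omega),
    Fin.val_cast_of_lt (Nat.lt_succ_of_le hk), Finset.mem_Icc]
  split_ifs <;> first | omega | simp_all

section Coordinates

variable (hj : j ≤ l0) (hl0 : l0 + 1 ≤ m)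
include hj hl0

lemma lamJQ_apply_zero : lamJQ m l l0 j q 0 = j - q :=
  (lamJQ_apply l q hj hl0 (Nat.zero_le m)).trans (if_pos rfl)

lemma lamJQ_apply_of_le {k : ℕ} (hk1 : 1 ≤ k) (hkj : k ≤ j) : lamJQ m l l0 j q k = l k := by
  rw [lamJQ_apply l q hj hl0 (by omega), if_neg (by omega), if_pos hkj]

lemma lamJQ_apply_succ : lamJQ m l l0 j q (j + 1 : ℕ) = q := by
  rw [lamJQ_apply l q hj hl0 (by omega), if_neg (by omega), if_neg (by omega), if_pos rfl]

end Coordinates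

lemma lamJQ_eq_add_zsmul :
    lamJQ m l l0 j q =
      lamJQ m l l0 j 0 + ((-q : ℤ) : ℚ) • (eps m 0 + (-1 : ℚ) • eps m (j + 1)) := by
  unfold lamJQ
  push_cast
  module

lemma form_lamJQ_add_rhoB (hj : j ≤ l0) (hl0 : l0 + 1 ≤ m) :
    form m (lamJQ m l l0 j q + rhoB m) (eps m 0 + (-1 : ℚ) • eps m (j + 1)) = 0 := by
  rw [form_oddRoot (by omega) (by omega), Pi.add_apply, Pi.add_apply, rhoB_zero,
    rhoB_natCast (by omega) (by omega), lamJQ_apply_zero l q hj hl0, lamJQ_apply_succ l q hj hl0]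
  push_cast
  ring

lemma lamJQ_eq_sub_smul (hj : j + 1 ≤ l0) :
    lamJQ m l l0 j q = lamJQ m l l0 (j + 1) (q + 1) -
      (l (j + 1 : ℕ) - q) • (eps m (j + 1) - eps m (j + 2)) := by
  unfold lamJQ
  rw [Finset.sum_Icc_succ_top (by omega), ← Finset.add_sum_Ioc_eq_sum_Icc hj,
    ← Finset.Icc_add_one_left_eq_Ioc]
  push_cast
  module

lemma lamJQ_add_rhoB_sub (hj : j + 1 ≤ l0) (hl0 : l0 + 1 ≤ m) :
    (lamJQ m l l0 (j + 1) (q + 1) + rhoB m) (j + 1 : ℕ) -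
      (lamJQ m l l0 (j + 1) (q + 1) + rhoB m) (j + 2 : ℕ) = l (j + 1 : ℕ) - q := by
  rw [Pi.add_apply, Pi.add_apply, lamJQ_apply_of_le l _ hj hl0 (by omega) le_rfl,
    lamJQ_apply_succ l _ hj hl0, rhoB_natCast (by omega) (by omega),
    rhoB_natCast (by omega) (by omega)]
  push_cast
  ring

lemma lamJQ_self_zero (hP : PB m l) (hl0 : (l0 : ℚ) = l 0) (hl0m : l0 + 1 ≤ m) :
    lamJQ m l l0 l0 0 = l := by
  have hvanish : ∀ k : Fin (m+1), l0 < (k : ℕ) → l k = 0 := fun k hk => by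
    simpa using hP.2.2.2.2 k (by omega) (by omega) (by rw [← hl0]; exact_mod_cast hk)
  funext k
  rw [← Fin.cast_val_eq_self k, lamJQ_apply l 0 le_rfl hl0m (by omega)]
  split_ifs with h0
  · rw [Fin.cast_val_eq_self, show k = 0 from Fin.ext h0, ← hl0, Int.cast_zero, sub_zero]
  · rfl
  · rw [Fin.cast_val_eq_self, hvanish k (by omega), Int.cast_zero]
  · omega
  · rw [Fin.cast_val_eq_self, hvanish k (by omega)]

end LamJQ

lemma permSet_subset_WB (m : ℕ) : permSet m ⊆ WB m :=
  fun _ hw => Subgroup.subset_closure (Or.inl (Or.inl hw))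

section Chain

variable {m : ℕ} (l : Fin (m+1) → ℚ) {l0 : ℕ} (hl0 : l0 + 1 ≤ m)
include hl0

lemma blockB_lamJQ_zero {j : ℕ} (hj : j ≤ l0) (q : ℤ) :
    blockB m (lamJQ m l l0 j 0) (lamJQ m l l0 j q) := by
  rw [lamJQ_eq_add_zsmul l q]
  exact blockRel_add_zsmul_oddRoot (by omega) (by omega) (Or.inr rfl)
    (form_lamJQ_add_rhoB l 0 hj hl0) _

lemma blockB_lamJQ_succ {j : ℕ} (hj : j + 1 ≤ l0) (q : ℤ) :
    blockB m (lamJQ m l l0 (j + 1) (q + 1)) (lamJQ m l l0 j q) := by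
  have h := blockRel_sub_smul_eps_sub_eps (ρ := rhoB m) (permSet_subset_WB m)
    (a := j + 1) (b := j + 2) (by omega) (by omega) (by omega) (by omega)
    (lamJQ m l l0 (j + 1) (q + 1))
  rwa [lamJQ_add_rhoB_sub l q hj hl0, ← lamJQ_eq_sub_smul l q hj] at h

lemma blockB_lamJQ_of_le {j : ℕ} (hj : j ≤ l0) (q : ℤ) :
    blockB m (lamJQ m l l0 l0 0) (lamJQ m l l0 j q) := by
  induction hj using Nat.decreasingInduction generalizing q with
  | self => exact blockB_lamJQ_zero l hl0 le_rfl q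
  | of_succ j hj ih =>
    exact blockRel_equivalence.trans (ih (q + 1)) (blockB_lamJQ_succ l hl0 hj q)

end Chain

theorem lemma51_B_general (m : ℕ) (l : Fin (m+1) → ℚ) (hP : PB m l)
    (l0 : ℕ) (hl0 : (l0 : ℚ) = l 0) (hle : l 0 ≤ (m : ℚ) - 1) :
    ∀ j : ℕ, j ≤ l0 → ∀ q : ℤ, blockB m l (lamJQ m l l0 j q) := by
  have hl0m : l0 + 1 ≤ m := by exact_mod_cast (show (l0 : ℚ) + 1 ≤ m by linarith)
  intro j hj q
  simpa only [lamJQ_self_zero l hP hl0 hl0m] using blockB_lamJQ_of_le l hl0m hj q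

/-- Lemma 5.1 for `osp(2m+1|2)`: if `λ ∈ 𝒫` with `λ₀ ≤ m−1` then `λ ∼ λ^{j,q}`
for all `0 ≤ j ≤ λ₀`, `q ∈ ℤ`. -/
theorem lemma51_B (m : ℕ) (hm : 1 ≤ m) (l : Fin (m+1) → ℚ) (hP : PB m l)
    (l0 : ℕ) (hl0 : (l0 : ℚ) = l 0) (hle : l 0 ≤ (m : ℚ) - 1) :
    ∀ j : ℕ, j ≤ l0 → ∀ q : ℤ, blockB m l (lamJQ m l l0 j q) :=
  lemma51_B_general m l hP l0 hl0 hle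
end

section
/- For osp(2m|2): let λ ∈ 𝒫 with λ₀ ≥ m and λ^δ ∈ 𝒫 (equivalently m ≤ λ₀ ≤ 2m−2−k, where k is the largest index with λ_k ≠ 0). Then 1 ≤ 2m−1−λ₀ ≤ m−1, λ_{2m−1−λ₀} = 0, and ⟨λ+ρ, δ+ε_{2m−1−λ₀}⟩ = 0; in particular λ is atypical. -/
open Finset
open Fin.NatCast

/-!
Dominance of `λ^δ`, a weight of level `2m−2−λ₀`, gives `λ₀ ≤ 2m−2` and kills `λ_i` for
`i = 2m−1−λ₀ > 2m−2−λ₀`. With `ρ₀ = 1−m` and `ρ_i = m−i` the pairing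
`⟨λ+ρ, δ+ε_i⟩ = −(λ₀+1−m) + (λ_i+m−i)` then vanishes exactly for this `i`.
-/

lemma Fin.natCast_ne_zero_of_pos_of_le {m i : ℕ} (hi : 1 ≤ i) (him : i ≤ m) :
    (i : Fin (m+1)) ≠ 0 := by
  rw [Ne, Fin.ext_iff, Fin.val_cast_of_lt (by omega)]
  simp only [Fin.val_zero]
  omega

lemma form_delta_add_eps (m : ℕ) (μ : Fin (m+1) → ℚ) {i : ℕ} (hi : (i : Fin (m+1)) ≠ 0) :
    form m μ (eps m 0 + eps m i) = -μ 0 + μ i := by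
  have hterm : ∀ j : Fin (m+1), (if j = 0 then 0 else μ j * (eps m 0 + eps m i) j)
      = if j = (i : Fin (m+1)) then μ j else 0 := by
    intro j
    by_cases hj0 : j = 0 <;> by_cases hji : j = (i : Fin (m+1)) <;>
      simp_all [eps]
  have hδ : (eps m 0 + eps m i) 0 = 1 := by
    simp [eps, Ne.symm hi]
  simp only [form, hterm, Finset.sum_ite_eq', Finset.mem_univ, if_true, hδ]
  ring

lemma rhoD_zero (m : ℕ) : rhoD m 0 = 1 - m := if_pos rfl

lemma rhoD_of_ne_zero (m : ℕ) {i : ℕ} (hi : 1 ≤ i) (him : i ≤ m) :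
    rhoD m (i : Fin (m+1)) = m - i := by
  simp only [rhoD, if_neg (Fin.natCast_ne_zero_of_pos_of_le hi him),
    Fin.val_cast_of_lt (Nat.lt_succ_of_le him)]

section deltaD

variable {m : ℕ} {l : Fin (m+1) → ℚ}

lemma deltaD_zero : deltaD m l 0 = 2 * m - 2 - l 0 := if_pos rfl

lemma deltaD_of_ne_zero {i : Fin (m+1)} (hi : i ≠ 0) : deltaD m l i = l i := if_neg hi

lemma le_of_PD_deltaD (hδ : PD m (deltaD m l)) : l 0 ≤ 2 * m - 2 := by
  have h := hδ.2.1
  rw [deltaD_zero] at h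
  linarith

lemma eq_zero_of_PD_deltaD (hδ : PD m (deltaD m l)) {i : ℕ} (hi : 1 ≤ i) (him : i ≤ m)
    (hlt : 2 * m - 2 - l 0 < i) : l (i : Fin (m+1)) = 0 := by
  have h := hδ.2.2.2.2.2 i hi him (by rwa [deltaD_zero])
  rwa [deltaD_of_ne_zero (Fin.natCast_ne_zero_of_pos_of_le hi him)] at h

end deltaD

theorem high_level_atypical_D_general (m : ℕ) (l : Fin (m+1) → ℚ)
    (l0 : ℕ) (hl0 : (l0 : ℚ) = l 0) (h0 : (m : ℚ) ≤ l 0) (hδ : PD m (deltaD m l)) :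
    1 ≤ 2*m - 1 - l0 ∧ 2*m - 1 - l0 ≤ m - 1 ∧
    l ((2*m - 1 - l0 : ℕ) : Fin (m+1)) = 0 ∧
    form m (l + rhoD m) (eps m 0 + eps m (2*m - 1 - l0)) = 0 ∧
    Atyp m (rhoD m) l := by
  have hm_le : m ≤ l0 := by exact_mod_cast hl0 ▸ h0
  have hle : l0 + 2 ≤ 2 * m := by
    have : (l0 : ℚ) + 2 ≤ 2 * m := by linarith [le_of_PD_deltaD hδ]
    exact_mod_cast this
  set i := 2*m - 1 - l0 with hi_def
  have hi1 : 1 ≤ i := by omega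
  have him : i ≤ m - 1 := by omega
  have hi_cast : (i : ℚ) = 2 * m - 1 - l0 := by
    rw [hi_def, Nat.cast_sub (by omega), Nat.cast_sub (by omega)]
    push_cast
    ring
  have hli : l (i : Fin (m+1)) = 0 :=
    eq_zero_of_PD_deltaD hδ hi1 (by omega) (by linarith)
  have hform : form m (l + rhoD m) (eps m 0 + eps m i) = 0 := by
    rw [form_delta_add_eps m _ (Fin.natCast_ne_zero_of_pos_of_le hi1 (by omega))]
    simp only [Pi.add_apply, rhoD_zero, rhoD_of_ne_zero m hi1 (by omega : i ≤ m), hli]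
    linarith
  exact ⟨hi1, him, hli, hform, i, hi1, by omega, 1, Or.inl rfl, by rwa [one_smul]⟩

/-- For `osp(2m|2)`: if `λ ∈ 𝒫` with `λ₀ ≥ m` and `λ^δ ∈ 𝒫`, then
`1 ≤ 2m−1−λ₀ ≤ m−1`, `λ_{2m−1−λ₀} = 0` and `⟨λ+ρ, δ+ε_{2m−1−λ₀}⟩ = 0`;
in particular `λ` is atypical. -/
theorem high_level_atypical_D (m : ℕ) (hm : 2 ≤ m) (l : Fin (m+1) → ℚ) (hP : PD m l)
    (l0 : ℕ) (hl0 : (l0 : ℚ) = l 0) (h0 : (m : ℚ) ≤ l 0) (hδ : PD m (deltaD m l)) :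
    1 ≤ 2*m - 1 - l0 ∧ 2*m - 1 - l0 ≤ m - 1 ∧
    l ((2*m - 1 - l0 : ℕ) : Fin (m+1)) = 0 ∧
    form m (l + rhoD m) (eps m 0 + eps m (2*m - 1 - l0)) = 0 ∧
    Atyp m (rhoD m) l :=
  high_level_atypical_D_general m l l0 hl0 h0 hδ
end
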